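/- Let W and T be real n×n matrices with W symmetric positive definite and T symmetric positive semidefinite, and let α > 0. Then, with ‖·‖₂ the spectral (operator ℓ²) norm and κ(W) = ‖W‖₂·‖W^{-1}‖₂, one has ‖(αW + T)^{-1}(W - αT)‖₂ ≤ √κ(W) · max over the eigenvalues μ of S = W^{-1/2} T W^{-1/2} of |1 - αμ|/(α + μ). -/

import Mathlib

/-!
With `R = W^{1/2}` and `S = R⁻¹ T R⁻¹` we have `αW + T = R (α + S) R` and `W - αT = R (1 - αS) R`,
so the matrix is `R⁻¹ f(S) R` with `f(x) = (1 - αx)/(α + x)`. Conjugating by `R` costs at most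
`‖R‖ ‖R⁻¹‖ = √κ(W)` (C⋆-identity), and the spectral theorem gives `‖f(S)‖ = max |f(μ)|`, which is
`max |1 - αμ|/(α + μ)` because `S ⪰ 0`.
-/

open Matrix

open scoped ComplexOrder in
/-- The positive semidefinite square root of a positive semidefinite matrix
(restored with its former Mathlib definition, removed from Mathlib since). -/
noncomputable def Matrix.PosSemidef.sqrt {n : Type*} [Fintype n] [DecidableEq n]
    {𝕜 : Type*} [RCLike 𝕜] {A : Matrix n n 𝕜} (hA : A.PosSemidef) : Matrix n n 𝕜 :=
  hA.isHermitian.eigenvectorUnitary.1 * diagonal ((↑) ∘ (√·) ∘ hA.isHermitian.eigenvalues) *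
  (star hA.isHermitian.eigenvectorUnitary : Matrix n n 𝕜)

/-- The operator norm on `n × n` real matrices induced by the Euclidean (`ℓ²`) vector norm. -/
noncomputable def l2OpNorm {n : ℕ} (M : Matrix (Fin n) (Fin n) ℝ) : ℝ :=
  ‖(Matrix.toEuclideanCLM (𝕜 := ℝ) M : EuclideanSpace ℝ (Fin n) →L[ℝ] EuclideanSpace ℝ (Fin n))‖

open scoped Matrix.Norms.L2Operator ComplexOrder

namespace Matrix

variable {n 𝕜 : Type*} [Fintype n] [DecidableEq n] [RCLike 𝕜] {A : Matrix n n 𝕜}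

lemma PosSemidef.spectrum_nonneg (hA : A.PosSemidef) : ∀ x ∈ spectrum ℝ A, 0 ≤ x := by
  rw [hA.isHermitian.spectrum_real_eq_range_eigenvalues]
  rintro - ⟨i, rfl⟩
  exact hA.eigenvalues_nonneg i

lemma PosSemidef.sqrt_eq_cfc (hA : A.PosSemidef) : hA.sqrt = cfc Real.sqrt A :=
  (hA.isHermitian.cfc_eq _).symm

lemma PosSemidef.sqrt_isHermitian (hA : A.PosSemidef) : hA.sqrt.IsHermitian := by
  rw [hA.sqrt_eq_cfc]
  exact cfc_predicate _ A

lemma PosSemidef.sqrt_mul_self (hA : A.PosSemidef) : hA.sqrt * hA.sqrt = A := by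
  have : A.IsHermitian := hA.isHermitian
  rw [hA.sqrt_eq_cfc, ← cfc_mul ..]
  exact (cfc_congr fun x hx ↦ Real.mul_self_sqrt (hA.spectrum_nonneg x hx)).trans (cfc_id' ℝ A)

lemma PosDef.isUnit_det_sqrt (hA : A.PosDef) : IsUnit hA.posSemidef.sqrt.det := by
  refine isUnit_iff_ne_zero.mpr fun h ↦ hA.det_pos.ne' ?_
  rw [← hA.posSemidef.sqrt_mul_self, det_mul, h, zero_mul]

lemma IsHermitian.inv_cfc_eq_cfc_inv (hA : A.IsHermitian) (f : ℝ → ℝ)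
    (hf : ∀ x ∈ spectrum ℝ A, f x ≠ 0) : (cfc f A)⁻¹ = cfc (fun x ↦ (f x)⁻¹) A := by
  have : IsSelfAdjoint A := hA
  refine inv_eq_right_inv ?_
  rw [← cfc_mul _ _ A (A.finite_real_spectrum.continuousOn _)
    (A.finite_real_spectrum.continuousOn _), ← cfc_one ℝ A]
  exact cfc_congr fun x hx ↦ mul_inv_cancel₀ (hf x hx)

lemma PosSemidef.inv_smul_one_add_mul_one_sub_smul_eq_cfc {S : Matrix n n 𝕜} (hS : S.PosSemidef)
    {α : ℝ} (hα : 0 < α) :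
    (α • (1 : Matrix n n 𝕜) + S)⁻¹ * (1 - α • S) = cfc (fun x ↦ (1 - α * x) / (α + x)) S := by
  have : IsSelfAdjoint S := hS.isHermitian
  have hX : α • 1 + S = cfc (fun x ↦ α + x) S := by
    rw [cfc_const_add .., cfc_id' ℝ S, Algebra.algebraMap_eq_smul_one]
  have hY : 1 - α • S = cfc (fun x ↦ 1 - α * x) S := by
    rw [cfc_sub (fun _ ↦ 1) (α * ·) S, cfc_const_mul_id .., cfc_const .., map_one]
  have hX_ne : ∀ x ∈ spectrum ℝ S, α + x ≠ 0 := fun x hx ↦ by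
    linarith [hS.spectrum_nonneg x hx]
  rw [hX, hY, hS.isHermitian.inv_cfc_eq_cfc_inv _ hX_ne,
    ← cfc_mul _ _ S (S.finite_real_spectrum.continuousOn _)]
  simp only [inv_mul_eq_div]

lemma IsHermitian.l2_opNorm_cfc (hA : A.IsHermitian) (f : ℝ → ℝ) :
    ‖cfc f A‖ = ‖f ∘ hA.eigenvalues‖ := by
  have hU := hA.eigenvectorUnitary.prop
  rw [hA.cfc_eq, IsHermitian.cfc, Unitary.conjStarAlgAut_apply,
    CStarRing.norm_mul_mem_unitary _ (Unitary.star_mem hU), CStarRing.norm_mem_unitary_mul _ hU,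
    l2_opNorm_diagonal]
  simp [Pi.norm_def]

lemma IsHermitian.l2_opNorm_cfc_le_iSup (hA : A.IsHermitian) (f : ℝ → ℝ) :
    ‖cfc f A‖ ≤ ⨆ i, |f (hA.eigenvalues i)| := by
  rw [hA.l2_opNorm_cfc, pi_norm_le_iff_of_nonneg (Real.iSup_nonneg fun _ ↦ abs_nonneg _)]
  exact fun i ↦ le_ciSup (f := fun i ↦ |f (hA.eigenvalues i)|) (Set.finite_range _).bddAbove i

lemma inv_conj_mul_conj {R : Matrix n n 𝕜} (hR : IsUnit R.det) (A B : Matrix n n 𝕜) :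
    (R * A * R)⁻¹ * (R * B * R) = R⁻¹ * (A⁻¹ * B) * R := by
  simp only [mul_inv_rev, mul_assoc, nonsing_inv_mul_cancel_left _ _ hR]

lemma inv_smul_add_mul_sub_smul_eq_conj {R S T : Matrix n n 𝕜} (hR : IsUnit R.det)
    (hS : S = R⁻¹ * T * R⁻¹) (α : ℝ) :
    (α • (R * R) + T)⁻¹ * (R * R - α • T) = R⁻¹ * ((α • 1 + S)⁻¹ * (1 - α • S)) * R := by
  have hT : T = R * S * R := by
    rw [hS]
    simp only [mul_assoc, mul_nonsing_inv_cancel_left _ _ hR, nonsing_inv_mul _ hR, mul_one]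
  rw [← inv_conj_mul_conj hR, hT]
  simp only [mul_add, add_mul, mul_sub, sub_mul, mul_smul_comm, smul_mul_assoc, mul_one]

lemma IsHermitian.l2_opNorm_inv_mul_mul_le {R : Matrix n n 𝕜} (hR : R.IsHermitian)
    (M : Matrix n n 𝕜) : ‖R⁻¹ * M * R‖ ≤ √(‖R * R‖ * ‖(R * R)⁻¹‖) * ‖M‖ := by
  have hsq {X : Matrix n n 𝕜} (hX : X.IsHermitian) : ‖X * X‖ = ‖X‖ * ‖X‖ := by
    simpa only [star_eq_conjTranspose, hX.eq] using CStarRing.norm_star_mul_self (x := X)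
  rw [mul_inv_rev, hsq hR, hsq hR.inv, mul_mul_mul_comm, Real.sqrt_mul_self (by positivity)]
  calc ‖R⁻¹ * M * R‖ ≤ ‖R⁻¹‖ * ‖M‖ * ‖R‖ := norm_mul₃_le
    _ = ‖R‖ * ‖R⁻¹‖ * ‖M‖ := by ring

end Matrix

theorem c_h_bound_general
    {n : ℕ}
    (W T : Matrix (Fin n) (Fin n) ℝ)
    (hW : W.PosDef) (hT : T.PosSemidef)
    (S : Matrix (Fin n) (Fin n) ℝ)
    (hSdef : S = (hW.posSemidef.sqrt)⁻¹ * T * (hW.posSemidef.sqrt)⁻¹)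
    (hS : S.IsHermitian)
    (α : ℝ) (hα : 0 < α) :
    l2OpNorm ((α • W + T)⁻¹ * (W - α • T)) ≤
      Real.sqrt (l2OpNorm W * l2OpNorm W⁻¹) *
        (⨆ i, |1 - α * hS.eigenvalues i| / (α + hS.eigenvalues i)) := by
  set R := hW.posSemidef.sqrt
  have hR : R.IsHermitian := hW.posSemidef.sqrt_isHermitian
  have hRR : R * R = W := hW.posSemidef.sqrt_mul_self
  have hRdet : IsUnit R.det := hW.isUnit_det_sqrt
  have hS_psd : S.PosSemidef := by
    simpa only [hSdef, hR.inv.eq] using hT.mul_mul_conjTranspose_same R⁻¹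
  have hconj := inv_smul_add_mul_sub_smul_eq_conj hRdet hSdef α
  rw [hRR] at hconj
  calc l2OpNorm ((α • W + T)⁻¹ * (W - α • T))
      = ‖R⁻¹ * ((α • 1 + S)⁻¹ * (1 - α • S)) * R‖ := by rw [hconj]; rfl
    _ ≤ √(‖R * R‖ * ‖(R * R)⁻¹‖) * ‖cfc (fun x ↦ (1 - α * x) / (α + x)) S‖ := by
      rw [hS_psd.inv_smul_one_add_mul_one_sub_smul_eq_cfc hα]
      exact hR.l2_opNorm_inv_mul_mul_le _
    _ ≤ √(‖W‖ * ‖W⁻¹‖) * ⨆ i, |(1 - α * hS.eigenvalues i) / (α + hS.eigenvalues i)| := by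
      rw [hRR]
      gcongr
      exact hS.l2_opNorm_cfc_le_iSup _
    _ = _ := by
      congr 1
      refine iSup_congr fun i ↦ ?_
      rw [abs_div, abs_of_pos (add_pos_of_pos_of_nonneg hα (hS_psd.eigenvalues_nonneg i))]

/-- **Lemma 2, estimate for `c_h(α)`.** For `W` symmetric positive definite, `T` symmetric
positive semidefinite and `α > 0`,
`‖(αW + T)⁻¹(W - αT)‖₂ ≤ √κ(W) · max_{μ ∈ σ(S)} |1 - αμ|/(α + μ)`,
where `S = W^{-1/2} T W^{-1/2}` and `κ(W) = ‖W‖₂·‖W⁻¹‖₂`. -/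
theorem c_h_bound
    {n : ℕ} (hn : 0 < n)
    (W T : Matrix (Fin n) (Fin n) ℝ)
    (hW : W.PosDef) (hT : T.PosSemidef)
    (S : Matrix (Fin n) (Fin n) ℝ)
    (hSdef : S = (hW.posSemidef.sqrt)⁻¹ * T * (hW.posSemidef.sqrt)⁻¹)
    (hS : S.IsHermitian)
    (α : ℝ) (hα : 0 < α) :
    l2OpNorm ((α • W + T)⁻¹ * (W - α • T)) ≤
      Real.sqrt (l2OpNorm W * l2OpNorm W⁻¹) *
        (⨆ i, |1 - α * hS.eigenvalues i| / (α + hS.eigenvalues i)) :=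
  c_h_bound_general W T hW hT S hSdef hS α hα
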